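/- Let T be a finite tree (a finite connected acyclic simple graph) with at least two vertices whose center consists of exactly two vertices (equivalently, exactly two vertices attain the minimum eccentricity). Then the discrete Borsuk number of T equals 2, i.e., b(T) = 2. -/

import Mathlib

/-!
Two central vertices `a`, `b` of a tree are adjacent: the neighbour of `a` on the path to `b`
would otherwise be strictly closer than `a` or `b` to every vertex, hence have smaller
eccentricity. Let `r + 1` be their common eccentricity and cut the edge `a b`. A vertex of the
`a`-side is at distance at most `r` from `a`, so each side induces a subtree of diameter at most
`2 r`. A vertex farthest from `a` lies on the `b`-side at distance `r` from `b`, and symmetrically,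
so these two vertices are at distance `2 r + 1`: the two sides form a Borsuk partition. No
partition into one part is Borsuk, so `b(T) = 2`.
-/

open SimpleGraph

variable {V : Type*}

/-- A *Borsuk partition* of a finite simple graph `G` is a partition of its vertex set into
(nonempty) parts such that the subgraph induced on each part has (extended) diameter strictly
smaller than the (extended) diameter of `G`. -/
def IsBorsukPartition [Fintype V] [DecidableEq V] (G : SimpleGraph V)
    (P : Finpartition (Finset.univ : Finset V)) : Prop :=
  ∀ s ∈ P.parts, (G.induce (s : Set V)).ediam < G.ediam

/-- The *discrete Borsuk number* of a finite simple graph `G`: the minimum number of parts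
of a Borsuk partition of `G`. -/
noncomputable def borsukNumber [Fintype V] [DecidableEq V] (G : SimpleGraph V) : ℕ :=
  sInf {n | ∃ P : Finpartition (Finset.univ : Finset V),
    IsBorsukPartition G P ∧ P.parts.card = n}

/-- The eccentricity of a vertex: the supremum of extended distances to all vertices. -/
noncomputable def graphEccent (G : SimpleGraph V) (v : V) : ℕ∞ :=
  ⨆ u, G.edist v u

/-- The center of a graph: the set of vertices of minimum eccentricity. -/
def graphCenter (G : SimpleGraph V) : Set V :=
  {v | ∀ u, graphEccent G v ≤ graphEccent G u}

namespace SimpleGraph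

variable {W : Type*} {G : SimpleGraph V} {G' : SimpleGraph W} {T : SimpleGraph V}
  {a b c u v w x y : V}

lemma Hom.edist_le (f : G →g G') (u v : V) : G'.edist (f u) (f v) ≤ G.edist u v := by
  rcases eq_or_ne (G.edist u v) ⊤ with h | h
  · simp [h]
  · obtain ⟨p, hp⟩ := exists_walk_of_edist_ne_top h
    rw [← hp, ← Walk.length_map f]
    exact SimpleGraph.edist_le _

lemma ediam_le_of_surjective (f : G →g G') (hf : Function.Surjective f) :
    G'.ediam ≤ G.ediam := by
  refine ediam_le_of_edist_le fun u' v' => ?_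
  obtain ⟨u, rfl⟩ := hf u'
  obtain ⟨v, rfl⟩ := hf v'
  exact (f.edist_le u v).trans edist_le_ediam

lemma edist_induce_le {s : Set V} (p : G.Walk u v) (hp : ∀ x ∈ p.support, x ∈ s) :
    (G.induce s).edist ⟨u, hp u p.start_mem_support⟩ ⟨v, hp v p.end_mem_support⟩ ≤
      p.length := by
  have hlen := congrArg Walk.length (p.map_induce hp)
  rw [Walk.length_map] at hlen
  exact (edist_le _).trans_eq (by exact_mod_cast hlen)

lemma coe_dist_le_eccent (u v : V) : (G.dist u v : ℕ∞) ≤ G.eccent u :=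
  (ENat.natCast_toNat_le_self _).trans edist_le_eccent

lemma Connected.exists_dist_eq_eccent [Finite V] (hG : G.Connected) (u : V) :
    ∃ z, G.eccent u = G.dist u z ∧ ∀ v, G.dist u v ≤ G.dist u z := by
  obtain ⟨z, hz⟩ := G.exists_edist_eq_eccent_of_finite u
  have hz' : G.eccent u = G.dist u z := by rw [← hz, (hG u z).coe_dist_eq_edist]
  exact ⟨z, hz', fun v => by exact_mod_cast hz' ▸ coe_dist_le_eccent u v⟩

lemma IsAcyclic.length_eq_dist_of_isPath (hG : G.IsAcyclic) {p : G.Walk u v} (hp : p.IsPath) :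
    p.length = G.dist u v := by
  obtain ⟨q, hq, hlen⟩ := p.reachable.exists_path_of_dist
  have : p = q := congrArg Subtype.val ((hG.subsingleton_path u v).elim ⟨p, hp⟩ ⟨q, hq⟩)
  rw [this, hlen]

lemma IsAcyclic.dist_add_dist_of_mem_support (hG : G.IsAcyclic) {p : G.Walk u v} (hp : p.IsPath)
    (hx : x ∈ p.support) : G.dist u x + G.dist x v = G.dist u v := by
  classical
  rw [← hG.length_eq_dist_of_isPath hp, ← hG.length_eq_dist_of_isPath (hp.takeUntil hx),
    ← hG.length_eq_dist_of_isPath (hp.dropUntil hx), ← Walk.length_append, Walk.take_spec]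

/-- In a tree, deleting the edge `a b` leaves two components; `T.sideOf a b` is the one
containing `a`. -/
def sideOf (T : SimpleGraph V) (a b : V) : Set V :=
  {v | T.dist v b = T.dist v a + 1}

lemma mem_sideOf_self (hab : T.Adj a b) : a ∈ T.sideOf a b := by
  simp [sideOf, dist_eq_one_iff_adj.mpr hab]

lemma IsTree.compl_sideOf (hT : T.IsTree) (hab : T.Adj a b) :
    (T.sideOf a b)ᶜ = T.sideOf b a := by
  ext v
  have := hT.dist_eq_dist_add_one_of_adj v hab
  simp only [sideOf, Set.mem_compl_iff, Set.mem_ofPred_eq]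
  omega

lemma IsTree.mem_sideOf_of_dist_le (hT : T.IsTree) (hab : T.Adj a b)
    (h : T.dist v a ≤ T.dist v b) : v ∈ T.sideOf a b := by
  have := hT.dist_eq_dist_add_one_of_adj v hab
  simp only [sideOf, Set.mem_ofPred_eq]
  omega

lemma IsTree.support_subset_sideOf (hT : T.IsTree) (hab : T.Adj a b) (hv : v ∈ T.sideOf a b)
    {p : T.Walk v a} (hp : p.IsPath) : ∀ x ∈ p.support, x ∈ T.sideOf a b := by
  intro x hx
  by_contra hxa
  rw [← Set.mem_compl_iff, hT.compl_sideOf hab] at hxa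
  have hsplit := hT.isAcyclic.dist_add_dist_of_mem_support hp hx
  have htri : T.dist v b ≤ T.dist v x + T.dist x b := hT.connected.dist_triangle
  simp only [sideOf, Set.mem_ofPred_eq] at hv hxa
  omega

lemma IsTree.dist_eq_of_mem_sideOf (hT : T.IsTree) (hab : T.Adj a b) (hx : x ∈ T.sideOf a b)
    (hy : y ∈ T.sideOf b a) : T.dist x y = T.dist x a + 1 + T.dist y b := by
  obtain ⟨p, hp, hpl⟩ := hT.connected.exists_path_of_dist x a
  obtain ⟨q, hq, hql⟩ := hT.connected.exists_path_of_dist y b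
  have hpath : (p.append (q.reverse.cons hab)).IsPath := by
    rw [Walk.isPath_def, Walk.support_append, Walk.support_cons, List.tail_cons,
      Walk.support_reverse, List.nodup_append]
    refine ⟨hp.support_nodup, List.nodup_reverse.mpr hq.support_nodup, fun u hu v hv huv => ?_⟩
    have hu' := hT.support_subset_sideOf hab hx hp u hu
    have hv' := hT.support_subset_sideOf hab.symm hy hq v (List.mem_reverse.mp hv)
    rw [← huv, ← hT.compl_sideOf hab] at hv'
    exact hv' hu'
  rw [← hT.isAcyclic.length_eq_dist_of_isPath hpath, Walk.length_append, Walk.length_cons,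
    Walk.length_reverse, hpl, hql]
  ring

lemma IsTree.ediam_induce_sideOf_le (hT : T.IsTree) (hab : T.Adj a b) {r : ℕ}
    (hr : ∀ v, T.dist v b ≤ r + 1) : (T.induce (T.sideOf a b)).ediam ≤ 2 * r := by
  refine ediam_le_of_edist_le fun ⟨x, hx⟩ ⟨y, hy⟩ => ?_
  obtain ⟨p, hp, hpl⟩ := hT.connected.exists_path_of_dist x a
  obtain ⟨q, hq, hql⟩ := hT.connected.exists_path_of_dist y a
  have hs : ∀ v ∈ (p.append q.reverse).support, v ∈ T.sideOf a b := by
    simp only [Walk.mem_support_append_iff, Walk.support_reverse, List.mem_reverse]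
    rintro v (hv | hv)
    exacts [hT.support_subset_sideOf hab hx hp v hv, hT.support_subset_sideOf hab hy hq v hv]
  refine (edist_induce_le _ hs).trans ?_
  have := hr x
  have := hr y
  simp only [sideOf, Set.mem_ofPred_eq] at hx hy
  rw [Walk.length_append, Walk.length_reverse, hpl, hql]
  norm_cast
  omega

lemma IsTree.dist_lt_max_of_adj (hT : T.IsTree) (haw : T.Adj a w) (hc : c ∈ T.sideOf w a)
    (hcw : c ≠ w) (z : V) : T.dist z w < max (T.dist z a) (T.dist z c) := by
  by_cases hz : z ∈ T.sideOf w a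
  · simp only [sideOf, Set.mem_ofPred_eq] at hz
    omega
  · rw [← Set.mem_compl_iff, hT.compl_sideOf haw.symm] at hz
    have hcross := hT.dist_eq_of_mem_sideOf haw.symm hc hz
    have hpos := hT.connected.pos_dist_of_ne hcw
    simp only [sideOf, Set.mem_ofPred_eq] at hz
    rw [dist_comm (u := z) (v := c)]
    omega

lemma IsTree.adj_of_mem_graphCenter [Finite V] (hT : T.IsTree) (ha : a ∈ graphCenter T)
    (hb : b ∈ graphCenter T) (hne : a ≠ b) : T.Adj a b := by
  obtain ⟨p, hp, hpl⟩ := hT.connected.exists_path_of_dist a b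
  cases p with
  | nil => exact absurd rfl hne
  | @cons _ w _ haw q =>
    by_contra hnadj
    have hbw : b ≠ w := by rintro rfl; exact hnadj haw
    have hbside : b ∈ T.sideOf w a := by
      have hq := hT.isAcyclic.length_eq_dist_of_isPath (Walk.cons_isPath_iff _ _ |>.mp hp).1
      simp only [sideOf, Set.mem_ofPred_eq, Walk.length_cons] at hpl ⊢
      rw [dist_comm, ← hpl, hq, dist_comm]
    obtain ⟨z, hz, -⟩ := hT.connected.exists_dist_eq_eccent w
    have hlt := hT.dist_lt_max_of_adj haw hbside hbw z
    have hab : T.eccent b = T.eccent a := le_antisymm (hb a) (ha b)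
    refine (ha w).not_gt ?_
    calc T.eccent w = T.dist z w := by rw [hz, dist_comm]
      _ < max (T.dist z a : ℕ∞) (T.dist z b) :=
          (Nat.cast_lt.mpr hlt).trans_eq Nat.mono_cast.map_max
      _ ≤ T.eccent a := max_le (dist_comm (G := T) ▸ coe_dist_le_eccent a z)
          (hab ▸ dist_comm (G := T) ▸ coe_dist_le_eccent b z)

end SimpleGraph

section Borsuk

variable [Fintype V] [DecidableEq V] {G : SimpleGraph V}

lemma IsBorsukPartition.two_le_card [Nonempty V] {P : Finpartition (Finset.univ : Finset V)}
    (hP : IsBorsukPartition G P) : 2 ≤ P.parts.card := by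
  obtain ⟨s, hs⟩ := P.parts_nonempty Finset.univ_nonempty.ne_empty
  by_contra! hcard
  have hparts : P.parts = {s} := Finset.eq_singleton_iff_unique_mem.mpr
    ⟨hs, fun t ht => Finset.card_le_one.mp (by omega) t ht s hs⟩
  have hsu : s = Finset.univ := by simpa [hparts] using P.sup_parts
  have hlt := hP s hs
  rw [hsu, Finset.coe_univ] at hlt
  exact hlt.not_ge (ediam_le_of_surjective (induceUnivIso G).toHom (induceUnivIso G).surjective)

lemma borsukNumber_eq_two_of_ediam_induce_lt {S : Set V} (hS : S.Nonempty) (hSc : Sᶜ.Nonempty)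
    (h : (G.induce S).ediam < G.ediam) (hc : (G.induce Sᶜ).ediam < G.ediam) :
    borsukNumber G = 2 := by
  classical
  have : Nonempty V := hS.to_subtype.map Subtype.val
  let P : Finpartition (Finset.univ : Finset V) :=
    (Finpartition.indiscrete (Set.toFinset_nonempty.mpr hS).ne_empty).extend
      (by simpa [← Finset.coe_eq_empty] using hSc.ne_empty) disjoint_compl_right sup_compl_eq_top
  have hP : IsBorsukPartition G P := by
    intro s hs
    simp only [P, Finpartition.extend_parts, Finpartition.indiscrete_parts, Finset.mem_insert,
      Finset.mem_singleton] at hs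
    rcases hs with rfl | rfl
    · rwa [Finset.coe_compl, Set.coe_toFinset]
    · rwa [Set.coe_toFinset]
  have hcard : P.parts.card = 2 := by simp [P]
  exact le_antisymm (Nat.sInf_le ⟨P, hP, hcard⟩)
    (le_csInf ⟨2, P, hP, hcard⟩ fun n ⟨Q, hQ, hn⟩ => hn ▸ hQ.two_le_card)

end Borsuk

lemma SimpleGraph.IsTree.borsukNumber_eq_two_of_adj_of_eccent_eq [Fintype V] [DecidableEq V]
    {T : SimpleGraph V} {a b : V} (hT : T.IsTree) (hab : T.Adj a b)
    (he : T.eccent a = T.eccent b) : borsukNumber T = 2 := by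
  obtain ⟨za, hza, hfa⟩ := hT.connected.exists_dist_eq_eccent a
  obtain ⟨zb, hzb, hfb⟩ := hT.connected.exists_dist_eq_eccent b
  have hrab : T.dist b zb = T.dist a za := by exact_mod_cast hzb.symm.trans (he.symm.trans hza)
  obtain ⟨r, hr⟩ : ∃ r, T.dist a za = r + 1 :=
    Nat.exists_eq_add_one.mpr ((dist_eq_one_iff_adj.mpr hab).symm.trans_le (hfa b))
  have hra : T.dist za a = r + 1 := dist_comm.trans hr
  have hrb : T.dist zb b = r + 1 := dist_comm.trans (hrab.trans hr)
  have hA : ∀ v, T.dist v a ≤ r + 1 := fun v => dist_comm.trans_le ((hfa v).trans_eq hr)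
  have hB : ∀ v, T.dist v b ≤ r + 1 :=
    fun v => dist_comm.trans_le ((hfb v).trans_eq (hrab.trans hr))
  have hzaB : za ∈ T.sideOf b a := hT.mem_sideOf_of_dist_le hab.symm ((hB za).trans_eq hra.symm)
  have hzbA : zb ∈ T.sideOf a b := hT.mem_sideOf_of_dist_le hab ((hA zb).trans_eq hrb.symm)
  have hdiam : ((2 * r + 1 : ℕ) : ℕ∞) ≤ T.ediam := by
    have hcross := hT.dist_eq_of_mem_sideOf hab hzbA hzaB
    simp only [sideOf, Set.mem_ofPred_eq] at hzaB hzbA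
    rw [show 2 * r + 1 = T.dist zb za by omega, (hT.connected zb za).coe_dist_eq_edist]
    exact edist_le_ediam
  have hlt : ((2 * r : ℕ) : ℕ∞) < T.ediam := (Nat.cast_lt.mpr (by omega)).trans_le hdiam
  refine borsukNumber_eq_two_of_ediam_induce_lt (S := T.sideOf a b) ⟨a, mem_sideOf_self hab⟩
    ?_ ((hT.ediam_induce_sideOf_le hab hB).trans_lt (by exact_mod_cast hlt)) ?_ <;>
    rw [hT.compl_sideOf hab]
  · exact ⟨b, mem_sideOf_self hab.symm⟩
  · exact (hT.ediam_induce_sideOf_le hab.symm hA).trans_lt (by exact_mod_cast hlt)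

theorem borsukNumber_tree_of_center_two_general [Fintype V] [DecidableEq V] (T : SimpleGraph V)
    (htree : T.IsTree)
    (hcenter : (graphCenter T).ncard = 2) :
    borsukNumber T = 2 := by
  obtain ⟨c₁, c₂, hne, hC⟩ := Set.ncard_eq_two.mp hcenter
  have h₁ : c₁ ∈ graphCenter T := hC ▸ Set.mem_insert _ _
  have h₂ : c₂ ∈ graphCenter T := hC ▸ Set.mem_insert_of_mem _ rfl
  exact htree.borsukNumber_eq_two_of_adj_of_eccent_eq (htree.adj_of_mem_graphCenter h₁ h₂ hne)
    (le_antisymm (h₁ c₂) (h₂ c₁))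

/-- If `T` is a finite tree with at least two vertices whose center consists of exactly two
vertices, then the discrete Borsuk number of `T` is `2`. -/
theorem borsukNumber_tree_of_center_two [Fintype V] [DecidableEq V] (T : SimpleGraph V)
    (htree : T.IsTree) (hcard : 2 ≤ Fintype.card V)
    (hcenter : (graphCenter T).ncard = 2) :
    borsukNumber T = 2 :=
  borsukNumber_tree_of_center_two_general T htree hcenter
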